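/- Consider the SBCM on the path graph P_n with symmetrically placed zealots, and let g(γ) = 2γ(1 − v) − 1 where v = ω(1) = 1/(1 + exp(γ(1 − δ))). Then the harmonic state x̄ is linearly stable if and only if g(γ) < 0, and linearly unstable if and only if g(γ) > 0. -/

import Mathlib

open Finset Filter

namespace SBCM

variable {V : Type*} [Fintype V] [DecidableEq V]

/-- Sigmoidal influence weight. -/
noncomputable def wt (G : SimpleGraph V) [DecidableRel G.Adj] (γ δ : ℝ) (x : V → ℝ)
    (i j : V) : ℝ :=
  if G.Adj i j then 1 / (1 + Real.exp (γ * (x i - x j) ^ 2 - γ * δ)) else 0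

/-- SBCM update operator. -/
noncomputable def F (G : SimpleGraph V) [DecidableRel G.Adj] (Z : Finset V) (γ δ : ℝ)
    (x : V → ℝ) (i : V) : ℝ :=
  if i ∈ Z then 0
  else (∑ j, wt G γ δ x i j * (x j - x i)) / (∑ j, wt G γ δ x i j)

/-- Jacobian block over the persuadable nodes. -/
noncomputable def Jp (G : SimpleGraph V) [DecidableRel G.Adj] (Z : Finset V) (γ δ : ℝ)
    (x : V → ℝ) : Matrix {v : V // v ∉ Z} {v : V // v ∉ Z} ℝ :=
  fun i j => fderiv ℝ (fun y : V → ℝ => F G Z γ δ y i.val) x (Pi.single (j : V) (1 : ℝ))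

/-- `μ` is a (real) eigenvalue of the matrix `M`. -/
def HasEig {n : Type*} [Fintype n] (M : Matrix n n ℝ) (μ : ℝ) : Prop :=
  ∃ φ : n → ℝ, φ ≠ 0 ∧ M.mulVec φ = μ • φ

/-- All eigenvalues of `M` are strictly negative. -/
def LinStable {n : Type*} [Fintype n] (M : Matrix n n ℝ) : Prop :=
  ∀ μ : ℝ, HasEig M μ → μ < 0

/-- `M` has a strictly positive eigenvalue. -/
def LinUnstable {n : Type*} [Fintype n] (M : Matrix n n ℝ) : Prop :=
  ∃ μ : ℝ, 0 < μ ∧ HasEig M μ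

end SBCM

namespace SBCM

/-- The path graph on `n + 2` nodes `0, 1, …, n + 1`. -/
def pathG (n : ℕ) : SimpleGraph (Fin (n + 2)) where
  Adj j k := (j : ℕ) + 1 = (k : ℕ) ∨ (k : ℕ) + 1 = (j : ℕ)
  symm := ⟨fun _ _ h => Or.symm h⟩
  loopless := ⟨fun a h => by rcases h with h | h <;> omega⟩

instance (n : ℕ) : DecidableRel (pathG n).Adj :=
  fun _ _ => inferInstanceAs (Decidable (_ ∨ _))

/-- The zealots of the path graph: the two endpoints. -/
def Zpath (n : ℕ) : Finset (Fin (n + 2)) := {0, Fin.last (n + 1)}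

/-- The harmonic state on the path graph with symmetrically placed zealots:
`x̄_j = −(n+1)/2 + j` (`0`-indexed). -/
noncomputable def xbarPath (n : ℕ) : Fin (n + 2) → ℝ :=
  fun j => -((n : ℝ) + 1) / 2 + (j : ℕ)

end SBCM

/-! At the harmonic state every edge has length one, so all weights at a persuadable node
equal `v = ω(1)`, and the numerator of `F_i` vanishes; hence only its derivative contributes,
and `(r ω(r))' = v (1 - 2γ(1 - v)) = -v g` at `r = ±1`. Thus the Jacobian is `g/2` times the
Laplacian of the path grounded at the zealots. That matrix is symmetric, so it has an
eigenvector, and positive definite, because the path is connected and contains a zealot; hence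
every eigenvalue of the Jacobian has the sign of `g`, and there is at least one. -/

namespace SBCM

open Matrix

section Spectrum

variable {ι : Type*} [Fintype ι] {M : Matrix ι ι ℝ}

theorem sign_eq_of_hasEig_smul (hM : M.PosDef) {c μ : ℝ} (h : HasEig (c • M) μ) :
    SignType.sign μ = SignType.sign c := by
  obtain ⟨φ, hφ, heig⟩ := h
  have hnorm : 0 < φ ⬝ᵥ φ := dotProduct_star_self_pos_iff.2 hφ
  have hquad : 0 < φ ⬝ᵥ (M *ᵥ φ) := hM.dotProduct_mulVec_pos hφ
  have hμ : μ * (φ ⬝ᵥ φ) = c * (φ ⬝ᵥ (M *ᵥ φ)) := by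
    rw [← smul_eq_mul, ← dotProduct_smul, ← heig, smul_mulVec, dotProduct_smul, smul_eq_mul]
  rw [← mul_div_cancel_right₀ μ hnorm.ne', hμ, mul_div_assoc, sign_mul,
    sign_pos (div_pos hquad hnorm), mul_one]

theorem exists_hasEig_smul [Nonempty ι] (hM : M.IsHermitian) (c : ℝ) :
    ∃ μ, HasEig (c • M) μ := by
  classical
  let i := Classical.arbitrary ι
  refine ⟨c * hM.eigenvalues i, (hM.eigenvectorBasis i).ofLp, ?_, ?_⟩
  · simpa using hM.eigenvectorBasis.orthonormal.ne_zero i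
  · rw [smul_mulVec, hM.mulVec_eigenvectorBasis, smul_smul]

theorem linStable_smul_iff [Nonempty ι] (hM : M.PosDef) {c : ℝ} :
    LinStable (c • M) ↔ c < 0 := by
  refine ⟨fun h => ?_, fun hc μ hμ => ?_⟩
  · obtain ⟨μ, hμ⟩ := exists_hasEig_smul hM.isHermitian c
    rw [← sign_eq_neg_one_iff, ← sign_eq_of_hasEig_smul hM hμ, sign_eq_neg_one_iff]
    exact h μ hμ
  · rwa [← sign_eq_neg_one_iff, sign_eq_of_hasEig_smul hM hμ, sign_eq_neg_one_iff]

theorem linUnstable_smul_iff [Nonempty ι] (hM : M.PosDef) {c : ℝ} :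
    LinUnstable (c • M) ↔ 0 < c := by
  refine ⟨fun ⟨μ, hpos, hμ⟩ => ?_, fun hc => ?_⟩
  · rwa [← sign_eq_one_iff, ← sign_eq_of_hasEig_smul hM hμ, sign_eq_one_iff]
  · obtain ⟨μ, hμ⟩ := exists_hasEig_smul hM.isHermitian c
    refine ⟨μ, ?_, hμ⟩
    rwa [← sign_eq_one_iff, sign_eq_of_hasEig_smul hM hμ, sign_eq_one_iff]

end Spectrum

section Laplacian

variable {V : Type*} [Fintype V] [DecidableEq V] {Z : Finset V}

theorem lapMatrix_mulVec_apply_eq_sum (G : SimpleGraph V) [DecidableRel G.Adj] (v : V → ℝ) (i : V) :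
    (G.lapMatrix ℝ *ᵥ v) i = ∑ k, G.adjMatrix ℝ i k * (v i - v k) := by
  rw [SimpleGraph.lapMatrix_mulVec_apply, ← SimpleGraph.adjMatrix_mulVec_apply,
    SimpleGraph.degree_eq_sum_if_adj, sum_mul]
  simp only [mulVec, dotProduct, SimpleGraph.adjMatrix_apply, mul_sub, sum_sub_distrib]

theorem sum_dite_mem_zero_mul (φ : {v // v ∉ Z} → ℝ) (f : V → ℝ) :
    ∑ v, (if h : v ∈ Z then 0 else φ ⟨v, h⟩) * f v = ∑ i, φ i * f i := by
  rw [← Fintype.sum_subtype_add_sum_subtype (· ∈ Z),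
    sum_eq_zero fun i _ => by rw [dif_pos i.2, zero_mul], zero_add]
  exact sum_congr rfl fun i _ => by rw [dif_neg i.2]

theorem dotProduct_submatrix_mulVec (M : Matrix V V ℝ) (φ : {v // v ∉ Z} → ℝ) :
    φ ⬝ᵥ (M.submatrix Subtype.val Subtype.val *ᵥ φ) =
      (fun v => if h : v ∈ Z then 0 else φ ⟨v, h⟩) ⬝ᵥ
        (M *ᵥ fun v => if h : v ∈ Z then 0 else φ ⟨v, h⟩) := by
  simp only [dotProduct, mulVec, submatrix_apply]
  rw [sum_dite_mem_zero_mul]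
  simp only [mul_comm (M _ _), sum_dite_mem_zero_mul]

theorem posDef_lapMatrix_submatrix (G : SimpleGraph V) [DecidableRel G.Adj] (hG : G.Connected)
    (hZ : Z.Nonempty) :
    ((G.lapMatrix ℝ).submatrix (Subtype.val : {v // v ∉ Z} → V) Subtype.val).PosDef := by
  refine .of_dotProduct_mulVec_pos ((G.isHermitian_lapMatrix ℝ).submatrix _) fun φ hφ => ?_
  rw [star_trivial, dotProduct_submatrix_mulVec]
  set ψ : V → ℝ := fun v => if h : v ∈ Z then 0 else φ ⟨v, h⟩
  have hnonneg : 0 ≤ ψ ⬝ᵥ (G.lapMatrix ℝ *ᵥ ψ) := by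
    simpa using (G.posSemidef_lapMatrix ℝ).dotProduct_mulVec_nonneg ψ
  refine hnonneg.lt_of_ne fun h0 => hφ ?_
  rw [eq_comm, ← toLinearMap₂'_apply',
    G.lapMatrix_toLinearMap₂'_apply'_eq_zero_iff_forall_reachable] at h0
  obtain ⟨z, hz⟩ := hZ
  ext i
  simpa [ψ, i.2, hz] using h0 i z (hG.preconnected i z)

end Laplacian

section Jacobian

/-- The weight profile `ω`: on an edge, `wt G γ δ x i j = ω (x i - x j)`. -/
noncomputable def influence (γ δ r : ℝ) : ℝ := 1 / (1 + Real.exp (γ * r ^ 2 - γ * δ))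

variable {V : Type*} {γ δ : ℝ}

theorem influence_pos (r : ℝ) : 0 < influence γ δ r := by
  unfold influence; positivity

theorem influence_of_sq_eq_one {r : ℝ} (hr : r ^ 2 = 1) : influence γ δ r = influence γ δ 1 := by
  rw [influence, influence, hr, one_pow]

theorem influence_one : influence γ δ 1 = 1 / (1 + Real.exp (γ * (1 - δ))) := by
  rw [influence, one_pow, mul_one, mul_sub, mul_one]

theorem hasDerivAt_influence (r : ℝ) :
    HasDerivAt (influence γ δ) (-(2 * γ * r * influence γ δ r * (1 - influence γ δ r))) r := by
  have hexp : HasDerivAt (fun s => 1 + Real.exp (γ * s ^ 2 - γ * δ))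
      (Real.exp (γ * r ^ 2 - γ * δ) * (γ * (2 * r))) r := by
    simpa using ((((hasDerivAt_pow 2 r).const_mul γ).sub_const (γ * δ)).exp).const_add 1
  have hinfl : influence γ δ = fun s => (1 + Real.exp (γ * s ^ 2 - γ * δ))⁻¹ := by
    funext s; rw [influence, one_div]
  rw [hinfl]
  refine (hexp.fun_inv (by positivity)).congr_deriv ?_
  field_simp
  ring

theorem hasDerivAt_mul_influence (r : ℝ) :
    HasDerivAt (fun s => s * influence γ δ s)
      (influence γ δ r * (1 - 2 * γ * r ^ 2 * (1 - influence γ δ r))) r := by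
  refine ((hasDerivAt_id' r).fun_mul (hasDerivAt_influence r)).congr_deriv ?_
  ring

theorem wt_eq_adjMatrix_mul (G : SimpleGraph V) [DecidableRel G.Adj] (x : V → ℝ) (i j : V) :
    wt G γ δ x i j = G.adjMatrix ℝ i j * influence γ δ (x i - x j) := by
  unfold wt influence; split_ifs with h <;> simp [h]

section UnitSpacing

variable {G : SimpleGraph V} [DecidableRel G.Adj] {x : V → ℝ} {i : V}

theorem adjMatrix_mul_eq_of_unit_spacing (hunit : ∀ k, G.Adj i k → (x i - x k) ^ 2 = 1)
    {f : ℝ → ℝ} (hf : ∀ r, r ^ 2 = 1 → f r = f 1) (k : V) :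
    G.adjMatrix ℝ i k * f (x i - x k) = G.adjMatrix ℝ i k * f 1 := by
  by_cases h : G.Adj i k
  · rw [hf _ (hunit k h)]
  · simp [h]

theorem sum_wt_of_unit_spacing [Fintype V] (hunit : ∀ k, G.Adj i k → (x i - x k) ^ 2 = 1) :
    ∑ k, wt G γ δ x i k = G.degree i * influence γ δ 1 := by
  simp only [wt_eq_adjMatrix_mul,
    adjMatrix_mul_eq_of_unit_spacing hunit fun _ => influence_of_sq_eq_one]
  rw [← sum_mul, SimpleGraph.degree_eq_sum_if_adj]
  simp only [SimpleGraph.adjMatrix_apply]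

theorem sum_wt_mul_sub_of_unit_spacing [Fintype V] [DecidableEq V]
    (hunit : ∀ k, G.Adj i k → (x i - x k) ^ 2 = 1) :
    ∑ k, wt G γ δ x i k * (x k - x i) = -influence γ δ 1 * (G.lapMatrix ℝ *ᵥ x) i := by
  rw [lapMatrix_mulVec_apply_eq_sum, mul_sum]
  refine sum_congr rfl fun k _ => ?_
  rw [wt_eq_adjMatrix_mul, adjMatrix_mul_eq_of_unit_spacing hunit fun _ => influence_of_sq_eq_one]
  ring

end UnitSpacing

variable [Fintype V]

variable (γ δ) in
theorem hasFDerivAt_sum_wt_mul_sub (G : SimpleGraph V) [DecidableRel G.Adj] (x : V → ℝ) (i : V) :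
    HasFDerivAt (fun y : V → ℝ => ∑ k, wt G γ δ y i k * (y k - y i))
      (∑ k, -(G.adjMatrix ℝ i k * (influence γ δ (x i - x k) *
          (1 - 2 * γ * (x i - x k) ^ 2 * (1 - influence γ δ (x i - x k))))) •
        ((ContinuousLinearMap.proj i : (V → ℝ) →L[ℝ] ℝ) - ContinuousLinearMap.proj k)) x := by
  refine HasFDerivAt.fun_sum fun k _ => ?_
  have hdiff : HasFDerivAt (fun y : V → ℝ => y i - y k)
      ((ContinuousLinearMap.proj i : (V → ℝ) →L[ℝ] ℝ) - ContinuousLinearMap.proj k) x :=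
    (hasFDerivAt_apply i x).fun_sub (hasFDerivAt_apply k x)
  convert (((hasDerivAt_mul_influence (γ := γ) (δ := δ) _).comp_hasFDerivAt x hdiff).const_mul
    (G.adjMatrix ℝ i k)).fun_neg using 1
  · funext y; simp only [wt_eq_adjMatrix_mul, Function.comp_apply]; ring
  · rw [smul_smul]; exact neg_smul _ _

variable [DecidableEq V]

theorem Jp_apply_of_unit_spacing {G : SimpleGraph V} [DecidableRel G.Adj] {Z : Finset V}
    {x : V → ℝ} (i j : {v // v ∉ Z}) (hdeg : 0 < G.degree i)
    (hunit : ∀ k, G.Adj i k → (x i - x k) ^ 2 = 1) (hharm : (G.lapMatrix ℝ *ᵥ x) i = 0) :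
    Jp G Z γ δ x i j = (2 * γ * (1 - influence γ δ 1) - 1) / G.degree i * G.lapMatrix ℝ i j := by
  have hS := sum_wt_of_unit_spacing (γ := γ) (δ := δ) hunit
  have hN : ∑ k, wt G γ δ x i k * (x k - x i) = 0 := by
    rw [sum_wt_mul_sub_of_unit_spacing hunit, hharm, mul_zero]
  have hSpos : 0 < ∑ k, wt G γ δ x i k := hS ▸ mul_pos (by exact_mod_cast hdeg) (influence_pos 1)
  have hSdiff : DifferentiableAt ℝ (fun y : V → ℝ => ∑ k, wt G γ δ y i k) x := by
    simp only [wt_eq_adjMatrix_mul]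
    have hinfl := fun r => (hasDerivAt_influence (γ := γ) (δ := δ) r).differentiableAt
    fun_prop
  have hF := (hasFDerivAt_sum_wt_mul_sub γ δ G x i).fun_mul (hSdiff.fun_inv hSpos.ne').hasFDerivAt
  rw [hN, zero_smul, zero_add] at hF
  have hFeq : (fun y => F G Z γ δ y i) =
      fun y => (∑ k, wt G γ δ y i k * (y k - y i)) * (∑ k, wt G γ δ y i k)⁻¹ := by
    funext y; rw [F, if_neg i.2, div_eq_mul_inv]
  have hslope := adjMatrix_mul_eq_of_unit_spacing hunit
    (f := fun r => influence γ δ r * (1 - 2 * γ * r ^ 2 * (1 - influence γ δ r)))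
    fun r hr => by rw [influence_of_sq_eq_one hr, hr, one_pow]
  have hL : G.lapMatrix ℝ i j = ∑ k, G.adjMatrix ℝ i k *
      ((Pi.single (j : V) 1 : V → ℝ) i - (Pi.single (j : V) 1 : V → ℝ) k) := by
    rw [← lapMatrix_mulVec_apply_eq_sum, mulVec_single_one, col_apply]
  rw [Jp, hFeq, hF.fderiv]
  simp only [_root_.smul_apply, FunLike.coe_sum, Finset.sum_apply, FunLike.coe_smul,
    Pi.smul_apply, FunLike.coe_sub, Pi.sub_apply,
    ContinuousLinearMap.proj_apply, smul_eq_mul, hslope, hS, hL, mul_sum]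
  have hω := (influence_pos (γ := γ) (δ := δ) 1).ne'
  refine sum_congr rfl fun k _ => ?_
  field_simp
  ring

end Jacobian

section Path

variable {n : ℕ} {i : Fin (n + 2)}

theorem pathG_eq_pathGraph (n : ℕ) : pathG n = SimpleGraph.pathGraph (n + 2) := by
  ext i j; rw [SimpleGraph.pathGraph_adj]; rfl

theorem val_sub_one_add_one_of_notMem_Zpath (hi : i ∉ Zpath n) :
    ((i - 1 : Fin (n + 2)) : ℕ) = i - 1 ∧ ((i + 1 : Fin (n + 2)) : ℕ) = i + 1 ∧ 1 ≤ (i : ℕ) := by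
  simp only [Zpath, mem_insert, mem_singleton, not_or] at hi
  exact ⟨Fin.val_sub_one_of_ne_zero hi.1,
    Fin.val_add_one_of_lt (lt_of_le_of_ne (Fin.le_last i) hi.2),
    Nat.one_le_iff_ne_zero.2 (Fin.val_ne_zero_iff.2 hi.1)⟩

theorem pathG_neighborFinset (hi : i ∉ Zpath n) :
    (pathG n).neighborFinset i = {i - 1, i + 1} := by
  obtain ⟨hpred, hsucc, hpos⟩ := val_sub_one_add_one_of_notMem_Zpath hi
  ext k
  simp only [SimpleGraph.mem_neighborFinset, mem_insert, mem_singleton, Fin.ext_iff, hpred, hsucc]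
  show (i : ℕ) + 1 = k ∨ (k : ℕ) + 1 = i ↔ _
  omega

theorem sub_one_ne_add_one_of_notMem_Zpath (hi : i ∉ Zpath n) : i - 1 ≠ i + 1 := by
  obtain ⟨hpred, hsucc, -⟩ := val_sub_one_add_one_of_notMem_Zpath hi
  rw [Ne, Fin.ext_iff, hpred, hsucc]
  omega

theorem pathG_degree (hi : i ∉ Zpath n) : (pathG n).degree i = 2 := by
  rw [← SimpleGraph.card_neighborFinset_eq_degree, pathG_neighborFinset hi,
    card_pair (sub_one_ne_add_one_of_notMem_Zpath hi)]

theorem xbarPath_sub_sq_of_adj {k : Fin (n + 2)} (h : (pathG n).Adj i k) :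
    (xbarPath n i - xbarPath n k) ^ 2 = 1 := by
  rcases h with h | h <;>
  · simp only [xbarPath, ← h]; push_cast; ring

theorem lapMatrix_mulVec_xbarPath (hi : i ∉ Zpath n) :
    ((pathG n).lapMatrix ℝ *ᵥ xbarPath n) i = 0 := by
  obtain ⟨hpred, hsucc, hpos⟩ := val_sub_one_add_one_of_notMem_Zpath hi
  rw [SimpleGraph.lapMatrix_mulVec_apply, pathG_neighborFinset hi,
    sum_pair (sub_one_ne_add_one_of_notMem_Zpath hi), pathG_degree hi]
  simp only [xbarPath, hpred, hsucc, Nat.cast_sub hpos]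
  push_cast
  ring

end Path

end SBCM

theorem stmt_12_general (n : ℕ) (hn : 1 ≤ n) (γ δ : ℝ) :
    (SBCM.LinStable (SBCM.Jp (SBCM.pathG n) (SBCM.Zpath n) γ δ (SBCM.xbarPath n)) ↔
      2 * γ * (1 - 1 / (1 + Real.exp (γ * (1 - δ)))) - 1 < 0) ∧
    (SBCM.LinUnstable (SBCM.Jp (SBCM.pathG n) (SBCM.Zpath n) γ δ (SBCM.xbarPath n)) ↔
      0 < 2 * γ * (1 - 1 / (1 + Real.exp (γ * (1 - δ)))) - 1) := by
  set g := 2 * γ * (1 - 1 / (1 + Real.exp (γ * (1 - δ)))) - 1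
  have hJ : SBCM.Jp (SBCM.pathG n) (SBCM.Zpath n) γ δ (SBCM.xbarPath n) =
      (g / 2) • ((SBCM.pathG n).lapMatrix ℝ).submatrix Subtype.val Subtype.val := by
    ext i j
    rw [SBCM.Jp_apply_of_unit_spacing i j (by rw [SBCM.pathG_degree i.2]; norm_num)
      (fun _ => SBCM.xbarPath_sub_sq_of_adj) (SBCM.lapMatrix_mulVec_xbarPath i.2),
      SBCM.pathG_degree i.2, SBCM.influence_one]
    rfl
  have hM := SBCM.posDef_lapMatrix_submatrix (Z := SBCM.Zpath n) (SBCM.pathG n)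
    (SBCM.pathG_eq_pathGraph n ▸ SimpleGraph.pathGraph_connected (n + 1)) ⟨0, mem_insert_self _ _⟩
  have : Nonempty {v // v ∉ SBCM.Zpath n} := ⟨⟨1, by simp [SBCM.Zpath, Fin.ext_iff]; omega⟩⟩
  rw [hJ, SBCM.linStable_smul_iff hM, SBCM.linUnstable_smul_iff hM]
  constructor <;> constructor <;> intro h <;> linarith

/-- On the path graph `P_n`, with `g(γ) = 2γ(1 − v) − 1` and
`v = 1/(1 + exp(γ(1 − δ)))`, the harmonic state is linearly stable iff `g(γ) < 0`
and linearly unstable iff `g(γ) > 0`. -/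
theorem stmt_12 (n : ℕ) (hn : 1 ≤ n) (γ δ : ℝ) (hγ : 0 ≤ γ) (hδ : 0 ≤ δ) :
    (SBCM.LinStable (SBCM.Jp (SBCM.pathG n) (SBCM.Zpath n) γ δ (SBCM.xbarPath n)) ↔
      2 * γ * (1 - 1 / (1 + Real.exp (γ * (1 - δ)))) - 1 < 0) ∧
    (SBCM.LinUnstable (SBCM.Jp (SBCM.pathG n) (SBCM.Zpath n) γ δ (SBCM.xbarPath n)) ↔
      0 < 2 * γ * (1 - 1 / (1 + Real.exp (γ * (1 - δ)))) - 1) :=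
  stmt_12_general n hn γ δ
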